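/- arXiv:2511.07101 — 2 statements merged into one kernel-verified Lean document; each statement's English description precedes it below -/
import Mathlib

section
/- The quotient of the free abelian group Z^5 on generators s1, s2, s3, s4, s5 by the subgroup generated by the elements s4, s5, s1 + s3, and s1 - s2 - s3 is isomorphic to Z (infinite cyclic), generated by the image of s3. -/
abbrev burnsideRelations : Set (Fin 5 → ℤ) :=
  {Pi.single 3 1, Pi.single 4 1,
   Pi.single 0 1 + Pi.single 2 1,
   Pi.single 0 1 - Pi.single 1 1 - Pi.single 2 1}

/-- The coefficient of `s3` once `f` is reduced modulo the relations: `s1 ≡ -s3` and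
`s2 ≡ s1 - s3 ≡ -2 s3`. -/
def s3Coeff : (Fin 5 → ℤ) →+ ℤ :=
  AddMonoidHom.mk' (fun f => -f 0 - 2 * f 1 + f 2) fun f g => by simp only [Pi.add_apply]; ring

lemma s3Coeff_single_two : s3Coeff (Pi.single 2 1) = 1 := by
  simp [s3Coeff]

lemma closure_burnsideRelations_le_ker : AddSubgroup.closure burnsideRelations ≤ s3Coeff.ker := by
  rw [AddSubgroup.closure_le]
  rintro x (rfl | rfl | rfl | rfl) <;> simp [s3Coeff]

lemma sub_s3Coeff_smul_mem_closure (f : Fin 5 → ℤ) :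
    f - s3Coeff f • Pi.single 2 1 ∈ AddSubgroup.closure burnsideRelations := by
  have h : f - s3Coeff f • Pi.single 2 1 =
      (f 0 + f 1) • (Pi.single 0 1 + Pi.single 2 1)
      - f 1 • (Pi.single 0 1 - Pi.single 1 1 - Pi.single 2 1)
      + f 3 • Pi.single 3 1 + f 4 • Pi.single 4 1 := by
    funext i
    fin_cases i <;> simp [s3Coeff]; ring
  rw [h]
  refine add_mem (add_mem (sub_mem ?_ ?_) ?_) ?_ <;>
    exact zsmul_mem (AddSubgroup.subset_closure (by simp)) _

lemma closure_burnsideRelations_eq_ker : AddSubgroup.closure burnsideRelations = s3Coeff.ker := by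
  refine le_antisymm closure_burnsideRelations_le_ker fun f hf => ?_
  simpa [(AddMonoidHom.mem_ker).mp hf] using sub_s3Coeff_smul_mem_closure f

lemma s3Coeff_surjective : Function.Surjective s3Coeff := fun n =>
  ⟨n • Pi.single 2 1, by rw [map_zsmul, s3Coeff_single_two, smul_eq_mul, mul_one]⟩

/-- The C-localized Burnside group `Burn_3^C(ℤ/2)` for hyperelliptic `C` of genus ≥ 2:
the quotient of the free abelian group ℤ^5 on generators `s1,…,s5` (indexed `0,…,4`)
by the relations `s4 = s5 = 0`, `s1 + s3 = 0`, `s1 - s2 - s3 = 0` is infinite cyclic,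
generated by the image of `s3`. -/
theorem stmt0 :
    ∃ e : ((Fin 5 → ℤ) ⧸ (AddSubgroup.closure
        {Pi.single 3 1, Pi.single 4 1,
         Pi.single 0 1 + Pi.single 2 1,
         Pi.single 0 1 - Pi.single 1 1 - Pi.single 2 1} : AddSubgroup (Fin 5 → ℤ))) ≃+ ℤ,
      e (QuotientAddGroup.mk (Pi.single 2 1)) = 1 :=
  ⟨(QuotientAddGroup.quotientAddEquivOfEq closure_burnsideRelations_eq_ker).trans
      (QuotientAddGroup.quotientKerEquivOfSurjective s3Coeff s3Coeff_surjective),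
    s3Coeff_single_two⟩
end

section
/- Let H be a finite abelian group and b1, b2 characters of H generating the dual group. Set K = ker(b1 - b2) (the subgroup of H on which b1 and b2 agree). Then the restriction b1|_K generates the dual group of K; in particular K is cyclic. -/
/-!
Restricting characters to a subgroup `K` is surjective onto the characters of `K` (characters of
a finite abelian group extend from subgroups), so `b1|_K` and `b2|_K` generate the dual of `K`.
On `K = ker(b1 * b2⁻¹)` these two restrictions coincide, so the dual of `K` is cyclic, and hence
so is `K`, being isomorphic to its dual.
-/

open Subgroup MonoidHom

theorem MonoidHom.domRestrict_ker_mul_inv {G N : Type*} [Group G] [CommGroup N] (f g : G →* N) :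
    f.domRestrict (f * g⁻¹).ker = g.domRestrict (f * g⁻¹).ker := by
  ext x
  simpa [mul_inv_eq_one] using mem_ker.mp x.2

section Duality

variable {G : Type*} (M : Type*) [CommGroup G] [Finite G] [CommMonoid M]
  [HasEnoughRootsOfUnity M (Monoid.exponent G)]

theorem Subgroup.closure_image_domRestrictHom_eq_top {s : Set (G →* Mˣ)} (hs : closure s = ⊤)
    (K : Subgroup G) : closure (domRestrictHom K Mˣ '' s) = ⊤ := by
  rw [← MonoidHom.map_closure, hs, ← range_eq_map, range_eq_top]
  exact domRestrict_surjective M K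

variable {M} in
theorem CommGroup.isCyclic_of_closure_singleton_eq_top {χ : G →* Mˣ} (hχ : closure {χ} = ⊤) :
    IsCyclic G := by
  have : IsCyclic (G →* Mˣ) :=
    isCyclic_iff_exists_zpowers_eq_top.mpr ⟨χ, by rwa [zpowers_eq_closure]⟩
  obtain ⟨e⟩ := CommGroup.monoidHom_mulEquiv_of_hasEnoughRootsOfUnity G M
  exact isCyclic_of_surjective e e.surjective

end Duality

/-- If `b1, b2` are characters of a finite abelian group `H` generating the dual group,
and `K = ker(b1 * b2⁻¹)` is the subgroup where `b1` and `b2` agree, then the restriction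
`b1|_K` generates the dual group of `K`; in particular `K` is cyclic. -/
theorem stmt7 (H : Type*) [CommGroup H] [Fintype H]
    (b1 b2 : H →* ℂˣ)
    (hgen : Subgroup.closure {b1, b2} = (⊤ : Subgroup (H →* ℂˣ))) :
    Subgroup.closure {b1.comp (b1 * b2⁻¹).ker.subtype}
      = (⊤ : Subgroup ((b1 * b2⁻¹).ker →* ℂˣ)) ∧ IsCyclic (b1 * b2⁻¹).ker := by
  have hK := closure_image_domRestrictHom_eq_top ℂ hgen (b1 * b2⁻¹).ker
  rw [Set.image_pair, domRestrictHom_apply, domRestrictHom_apply,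
    ← domRestrict_ker_mul_inv b1 b2, Set.pair_eq_singleton] at hK
  exact ⟨hK, CommGroup.isCyclic_of_closure_singleton_eq_top hK⟩
end
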